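/- Let q be a nonzero complex number. There exists a unique ℂ-linear algebra antihomomorphism S : SL_q(2,ℂ) → SL_q(2,ℂ) (i.e. S(xy) = S(y)S(x) and S(1) = 1) with S(a) = d, S(b) = −qb, S(c) = −q⁻¹c, S(d) = a. Moreover, writing x₁₁ = a, x₁₂ = b, x₂₁ = c, x₂₂ = d, this S satisfies the antipode identities Σ_{k=1,2} S(x_{ik})x_{kj} = δ_{ij}·1 and Σ_{k=1,2} x_{ik}S(x_{kj}) = δ_{ij}·1 for all i, j ∈ {1,2}. -/
import Mathlib


noncomputable section

open FreeAlgebra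

/-- The Manin relations with parameter `q` together with the determinant relation
`a d − q⁻¹ b c = 1`. -/
inductive SLRel (q : ℂ) : FreeAlgebra ℂ (Fin 4) → FreeAlgebra ℂ (Fin 4) → Prop
  | ab : SLRel q (ι ℂ 0 * ι ℂ 1) (q⁻¹ • (ι ℂ 1 * ι ℂ 0))
  | ac : SLRel q (ι ℂ 0 * ι ℂ 2) (q⁻¹ • (ι ℂ 2 * ι ℂ 0))
  | bd : SLRel q (ι ℂ 1 * ι ℂ 3) (q⁻¹ • (ι ℂ 3 * ι ℂ 1))
  | cd : SLRel q (ι ℂ 2 * ι ℂ 3) (q⁻¹ • (ι ℂ 3 * ι ℂ 2))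
  | bc : SLRel q (ι ℂ 1 * ι ℂ 2) (ι ℂ 2 * ι ℂ 1)
  | ad : SLRel q (ι ℂ 0 * ι ℂ 3 - ι ℂ 3 * ι ℂ 0) ((q⁻¹ - q) • (ι ℂ 1 * ι ℂ 2))
  | det : SLRel q (ι ℂ 0 * ι ℂ 3 - q⁻¹ • (ι ℂ 1 * ι ℂ 2)) 1

/-- `SL_q(2,ℂ)`. -/
abbrev SLq (q : ℂ) := RingQuot (SLRel q)

/-- The images of the generators `a, b, c, d` in `SL_q(2,ℂ)`. -/
def gen (q : ℂ) (i : Fin 4) : SLq q := RingQuot.mkAlgHom ℂ (SLRel q) (ι ℂ i)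

/-- The matrix of generators:  `x₁₁ = a`, `x₁₂ = b`, `x₂₁ = c`, `x₂₂ = d`. -/
def X (q : ℂ) : Fin 2 → Fin 2 → SLq q := ![![gen q 0, gen q 1], ![gen q 2, gen q 3]]

/-- The defining properties of the antipode `S` of `SL_q(2,ℂ)`: a `ℂ`-linear algebra
antihomomorphism with `S(a) = d`, `S(b) = −q b`, `S(c) = −q⁻¹ c`, `S(d) = a`. -/
def IsAntipode (q : ℂ) (S : SLq q →ₗ[ℂ] SLq q) : Prop :=
  (∀ x y : SLq q, S (x * y) = S y * S x) ∧ S 1 = 1 ∧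
    S (gen q 0) = gen q 3 ∧ S (gen q 1) = (-q) • gen q 1 ∧
    S (gen q 2) = (-q⁻¹) • gen q 2 ∧ S (gen q 3) = gen q 0

namespace SLqAux

open MulOpposite

lemma rel_eq (q : ℂ) {x y} (h : SLRel q x y) :
    RingQuot.mkAlgHom ℂ (SLRel q) x = RingQuot.mkAlgHom ℂ (SLRel q) y :=
  RingQuot.mkAlgHom_rel ℂ h

lemma rab (q : ℂ) : gen q 0 * gen q 1 = q⁻¹ • (gen q 1 * gen q 0) := by
  simpa [gen, map_mul, map_smul] using rel_eq q SLRel.ab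
lemma rac (q : ℂ) : gen q 0 * gen q 2 = q⁻¹ • (gen q 2 * gen q 0) := by
  simpa [gen, map_mul, map_smul] using rel_eq q SLRel.ac
lemma rbd (q : ℂ) : gen q 1 * gen q 3 = q⁻¹ • (gen q 3 * gen q 1) := by
  simpa [gen, map_mul, map_smul] using rel_eq q SLRel.bd
lemma rcd (q : ℂ) : gen q 2 * gen q 3 = q⁻¹ • (gen q 3 * gen q 2) := by
  simpa [gen, map_mul, map_smul] using rel_eq q SLRel.cd
lemma rbc (q : ℂ) : gen q 1 * gen q 2 = gen q 2 * gen q 1 := by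
  simpa [gen, map_mul] using rel_eq q SLRel.bc
lemma rad (q : ℂ) :
    gen q 0 * gen q 3 - gen q 3 * gen q 0 = (q⁻¹ - q) • (gen q 1 * gen q 2) := by
  simpa [gen, map_mul, map_smul, map_sub] using rel_eq q SLRel.ad
lemma rdet (q : ℂ) : gen q 0 * gen q 3 - q⁻¹ • (gen q 1 * gen q 2) = 1 := by
  simpa [gen, map_mul, map_smul, map_sub] using rel_eq q SLRel.det

/-- `d a = 1 + q • b c`. -/
lemma rda (q : ℂ) : gen q 3 * gen q 0 = 1 + q • (gen q 1 * gen q 2) := by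
  have h1 := rad q
  have h2 := rdet q
  rw [sub_eq_iff_eq_add] at h2
  have e : gen q 3 * gen q 0
      = gen q 0 * gen q 3 - (gen q 0 * gen q 3 - gen q 3 * gen q 0) := by abel
  rw [e, h1, h2]
  module

/-- The values of the antipode on the generators. -/
def Sval (q : ℂ) : Fin 4 → SLq q := ![gen q 3, (-q) • gen q 1, (-q⁻¹) • gen q 2, gen q 0]

/-- Lift to the free algebra, with values in the opposite algebra. -/
def Sfree (q : ℂ) : FreeAlgebra ℂ (Fin 4) →ₐ[ℂ] (SLq q)ᵐᵒᵖ :=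
  FreeAlgebra.lift ℂ (fun i => op (Sval q i))

lemma Sfree_rel (q : ℂ) (hq : q ≠ 0) {x y} (h : SLRel q x y) : Sfree q x = Sfree q y := by
  have h2 : q * q⁻¹ = 1 := mul_inv_cancel₀ hq
  induction h <;>
    simp only [Sfree, Sval, map_mul, map_smul, map_sub, FreeAlgebra.lift_ι_apply,
      Matrix.cons_val_zero, Matrix.cons_val_one, Matrix.head_cons, Matrix.cons_val_two,
      Matrix.tail_cons, Matrix.cons_val_three, ← op_mul, ← op_smul, ← op_sub, ← op_one,
      op_inj, smul_mul_assoc, mul_smul_comm, smul_smul, map_one]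
  · rw [rbd, smul_smul]; congr 1; ring
  · rw [rcd, smul_smul]; congr 1; ring
  · rw [rab, smul_smul]; congr 1; ring
  · rw [rac, smul_smul]; congr 1; ring
  · rw [← rbc]; congr 1; ring
  · rw [← rbc, rad]; congr 1; rw [neg_mul_neg, h2, mul_one]
  · rw [neg_mul_neg, h2, mul_one, ← rbc, rdet]

/-- The antipode as an algebra map into the opposite algebra. -/
def SAlg (q : ℂ) (hq : q ≠ 0) : SLq q →ₐ[ℂ] (SLq q)ᵐᵒᵖ :=
  RingQuot.liftAlgHom ℂ ⟨Sfree q, fun _ _ h => Sfree_rel q hq h⟩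

/-- The antipode as a linear map. -/
def S₀ (q : ℂ) (hq : q ≠ 0) : SLq q →ₗ[ℂ] SLq q :=
  ((opLinearEquiv ℂ (M := SLq q)).symm.toLinearMap).comp (SAlg q hq).toLinearMap

lemma S₀_apply (q : ℂ) (hq : q ≠ 0) (x : SLq q) : S₀ q hq x = unop (SAlg q hq x) := rfl

lemma S₀_gen (q : ℂ) (hq : q ≠ 0) (i : Fin 4) : S₀ q hq (gen q i) = Sval q i := by
  rw [S₀_apply, gen, SAlg, RingQuot.liftAlgHom_mkAlgHom_apply]
  simp [Sfree]

lemma S₀_isAntipode (q : ℂ) (hq : q ≠ 0) : IsAntipode q (S₀ q hq) := by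
  refine ⟨fun x y => ?_, ?_, ?_, ?_, ?_, ?_⟩
  · rw [S₀_apply, map_mul, unop_mul, S₀_apply, S₀_apply]
  · rw [S₀_apply, map_one, unop_one]
  · simpa [Sval] using S₀_gen q hq 0
  · simpa [Sval] using S₀_gen q hq 1
  · simpa [Sval] using S₀_gen q hq 2
  · simpa [Sval] using S₀_gen q hq 3

lemma antipode_unique (q : ℂ) (S T : SLq q →ₗ[ℂ] SLq q)
    (hS : IsAntipode q S) (hT : IsAntipode q T) : S = T := by
  obtain ⟨hSm, hS1, hSa, hSb, hSc, hSd⟩ := hS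
  obtain ⟨hTm, hT1, hTa, hTb, hTc, hTd⟩ := hT
  ext x
  obtain ⟨y, rfl⟩ := RingQuot.mkAlgHom_surjective ℂ (SLRel q) x
  induction y using FreeAlgebra.induction with
  | grade0 r =>
      have : (RingQuot.mkAlgHom ℂ (SLRel q)) (algebraMap ℂ _ r) = r • 1 := by
        rw [AlgHom.commutes, Algebra.algebraMap_eq_smul_one]
      rw [this, map_smul, map_smul, hS1, hT1]
  | grade1 i =>
      have : (RingQuot.mkAlgHom ℂ (SLRel q)) (ι ℂ i) = gen q i := rfl
      rw [this]
      fin_cases i <;> simp_all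
  | mul x y hx hy => rw [map_mul, hSm, hTm, hx, hy]
  | add x y hx hy => rw [map_add, map_add, map_add, hx, hy]

end SLqAux

/-- There is a unique `ℂ`-linear algebra antihomomorphism `S` on `SL_q(2,ℂ)` with
`S(a) = d`, `S(b) = −q b`, `S(c) = −q⁻¹ c`, `S(d) = a`; moreover it satisfies the
antipode identities `Σ_k S(x_{ik}) x_{kj} = δ_{ij} 1 = Σ_k x_{ik} S(x_{kj})`. -/
theorem antipode_exists_unique (q : ℂ) (hq : q ≠ 0) :
    (∃! S : SLq q →ₗ[ℂ] SLq q, IsAntipode q S) ∧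
    (∀ S : SLq q →ₗ[ℂ] SLq q, IsAntipode q S →
      (∀ i j : Fin 2, (∑ k : Fin 2, S (X q i k) * X q k j) =
          if i = j then (1 : SLq q) else 0) ∧
      (∀ i j : Fin 2, (∑ k : Fin 2, X q i k * S (X q k j)) =
          if i = j then (1 : SLq q) else 0)) := by
  open SLqAux in
  have h2 : q * q⁻¹ = 1 := mul_inv_cancel₀ hq
  have h1 : q⁻¹ * q = 1 := inv_mul_cancel₀ hq
  constructor
  · exact ⟨SLqAux.S₀ q hq, SLqAux.S₀_isAntipode q hq,
      fun T hT => SLqAux.antipode_unique q T (SLqAux.S₀ q hq) hT (SLqAux.S₀_isAntipode q hq)⟩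
  · rintro S ⟨hSm, hS1, hSa, hSb, hSc, hSd⟩
    constructor <;> intro i j <;> fin_cases i <;> fin_cases j <;>
      simp only [X, Fin.sum_univ_two, Matrix.cons_val_zero, Matrix.cons_val_one,
        Matrix.head_cons, Fin.mk_zero, Fin.mk_one, hSa, hSb, hSc, hSd,
        if_true, if_false, Fin.zero_eta, Fin.isValue, reduceIte,
        (by decide : ((0:Fin 2) = 1) = False), (by decide : ((1:Fin 2) = 0) = False),
        (by decide : ((0:Fin 2) = 0) = True), (by decide : ((1:Fin 2) = 1) = True),
        smul_mul_assoc, mul_smul_comm]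
    · -- d a + (-q) • (b c) = 1
      rw [SLqAux.rda q]; module
    · -- d b + (-q) • (b d) = 0
      rw [SLqAux.rbd q, smul_smul, neg_mul, h2, neg_one_smul]; abel
    · -- (-q⁻¹) • (c a) + a c = 0
      rw [SLqAux.rac q]; module
    · -- (-q⁻¹) • (c b) + a d = 1
      have h := SLqAux.rdet q
      rw [sub_eq_iff_eq_add] at h
      rw [h, ← SLqAux.rbc q]; module
    · -- a d + (-q⁻¹) • (b c) = 1
      have h := SLqAux.rdet q
      rw [sub_eq_iff_eq_add] at h
      rw [h]; module
    · -- (-q) • (a b) + b a = 0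
      rw [SLqAux.rab q, smul_smul, neg_mul, h2, neg_one_smul]; abel
    · -- c d + (-q⁻¹) • (d c) = 0
      rw [SLqAux.rcd q]; module
    · -- (-q) • (c b) + d a = 1
      rw [← SLqAux.rbc q, SLqAux.rda q]; module
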